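/- Let Σ=(X,U,F) be a topological system (X is a topological space) and Q ⊆ X a nonempty closed set. Suppose that F(·,u) : X ⇉ X is lower semicontinuous for every u∈U. Let (𝒜,G) be an invariant cover of Σ and Q, and let 𝒞 := {cl A : A∈𝒜} be the set of closures of the cover elements. Then there exists a map H : 𝒞 → U with H(cl A) = G(A) for suitable representatives such that (𝒞,H) is an invariant cover of Σ and Q and h(𝒞,H) ≤ h(𝒜,G). -/

import Mathlib

open Set Filter Topology

/-- An invariant cover `(𝒜, G)` of the system with transition function `F` and the set `Q`:
`cov` is a finite cover of `Q` by subsets of `Q` and `G` assigns to each cover element an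
input such that `F(A, G(A)) ⊆ Q`. -/
structure InvCover {X U : Type*} (F : X → U → Set X) (Q : Set X) where
  cov : Set (Set X)
  G : Set X → U
  finite : cov.Finite
  subset : ∀ A ∈ cov, A ⊆ Q
  covers : Q ⊆ ⋃₀ cov
  inv : ∀ A ∈ cov, ∀ x ∈ A, F x (G A) ⊆ Q

variable {X U : Type*}

/-- The set `P(α|_{[0;t]})` associated with `𝒮 ⊆ 𝒜^{[0;τ)}`: for `t+1 < τ` it is the set of
possible successor cover elements of the initial piece `α|_{[0;t]}`, and for `t = τ-1`
(i.e. `¬ t + 1 < τ`) it is the set `P(α)` of initial cover elements. -/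
def Pset {τ : ℕ} (𝒮 : Set (Fin τ → Set X)) (α : Fin τ → Set X) (t : ℕ) :
    Set (Set X) :=
  if ht : t + 1 < τ then
    {A | ∃ β ∈ 𝒮, (∀ t' : Fin τ, (t' : ℕ) ≤ t → β t' = α t') ∧ A = β ⟨t + 1, ht⟩}
  else
    {A | ∃ β ∈ 𝒮, ∃ h0 : 0 < τ, A = β ⟨0, h0⟩}

/-- `𝒮` is `(τ,Q)`-spanning in the invariant cover `c`. -/
def IsSpanning (F : X → U → Set X) (Q : Set X) (c : InvCover F Q) (τ : ℕ)
    (𝒮 : Set (Fin τ → Set X)) : Prop :=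
  (∀ α ∈ 𝒮, ∀ t, α t ∈ c.cov) ∧
  (∀ x ∈ Q, ∃ α ∈ 𝒮, ∃ h0 : 0 < τ, x ∈ α ⟨0, h0⟩) ∧
  (∀ α ∈ 𝒮, ∀ t : Fin τ, (t : ℕ) + 1 < τ →
    ∀ x ∈ α t, F x (c.G (α t)) ⊆ ⋃ A ∈ Pset 𝒮 α (t : ℕ), A)

/-- The expansion number `N(𝒮)`. -/
noncomputable def expNum {τ : ℕ} (𝒮 : Set (Fin τ → Set X)) : ℕ :=
  sSup {n | ∃ α ∈ 𝒮, n = ∏ t ∈ Finset.range τ, (Pset 𝒮 α t).ncard}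

/-- `r_inv(τ, Q)` : the smallest expansion number of a `(τ,Q)`-spanning set (`⊤` if no
spanning set exists). -/
noncomputable def rinv (F : X → U → Set X) (Q : Set X) (c : InvCover F Q)
    (τ : ℕ) : ℕ∞ :=
  sInf {n | ∃ 𝒮 : Set (Fin τ → Set X), IsSpanning F Q c τ 𝒮 ∧ n = (expNum 𝒮 : ℕ∞)}

/-- Base-2 logarithm `ℕ∞ → EReal`, with `log₂ ∞ = ∞`. -/
noncomputable def elog2 (m : ℕ∞) : EReal :=
  WithTop.recTopCoe ⊤ (fun n : ℕ => ((Real.logb 2 n : ℝ) : EReal)) m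

/-- The entropy `h(𝒜,G)` of an invariant cover, defined through the infimum
`inf_{τ ≥ 1} (1/τ) log₂ r_inv(τ,Q)` (which equals the limit). -/
noncomputable def coverEntropy (F : X → U → Set X) (Q : Set X)
    (c : InvCover F Q) : EReal :=
  ⨅ (τ : ℕ) (_ : 0 < τ), (((τ : ℝ)⁻¹ : ℝ) : EReal) * elog2 (rinv F Q c τ)

/-- The invariance feedback entropy `h_inv` of the system and `Q`. -/
noncomputable def invEntropy (F : X → U → Set X) (Q : Set X) : EReal :=
  ⨅ c : InvCover F Q, coverEntropy F Q c

/-!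
Fix a `(τ,Q)`-spanning set `𝒮` with expansion number `n` and put `L = log₂ n`. Along a branch
`α` of `𝒮`, the potential `ψ(α,s) = s L/τ - log₂ ∏_{t<s} #P(α|_{[0;t]})` drops by exactly
`log₂ #P(α|_{[0;s]}) - L/τ` per step, and by at least that much across the restart from time
`τ - 1` to time `0`. Giving each cover element its occurrence of least potential, and each
closure `cl A` the representative of least potential, turns this into a potential on the
closures whose successors cover the dynamics by lower semicontinuity. Paths of length `T` along
these successors form a spanning set of the closure cover with expansion number at most
`2 ^ (3 L + T L/τ)`, so the closure cover chosen for `τ` has entropy at most `L/τ`. There are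
only finitely many choices of representatives, so one of them works for every `τ`.
-/

theorem exists_fiberwise_argmin {ι κ : Type*} {s : Set ι} (hs : s.Finite) {i₀ : ι}
    (hi₀ : i₀ ∈ s) (f : ι → κ) (g : ι → ℝ) :
    ∃ σ : κ → ι, (∀ k, σ k ∈ s) ∧ (∀ k ∉ f '' s, σ k = i₀) ∧
      ∀ i ∈ s, f (σ (f i)) = f i ∧ g (σ (f i)) ≤ g i := by
  classical
  have hmin : ∀ k ∈ f '' s, ∃ i ∈ s, f i = k ∧ ∀ j ∈ s, f j = k → g i ≤ g j := by
    rintro k ⟨j, hj, rfl⟩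
    obtain ⟨i, ⟨hi, hik⟩, hle⟩ :=
      exists_min_image (s ∩ f ⁻¹' {f j}) g (hs.inter_of_left _) ⟨j, hj, rfl⟩
    exact ⟨i, hi, hik, fun j' hj' hj'k => hle j' ⟨hj', hj'k⟩⟩
  choose σ hσs hσf hσg using hmin
  refine ⟨fun k => if hk : k ∈ f '' s then σ k hk else i₀, fun k => ?_,
    fun k hk => dif_neg hk, fun i hi => ?_⟩
  · dsimp only
    split_ifs with hk
    exacts [hσs k hk, hi₀]
  · have hk : f i ∈ f '' s := mem_image_of_mem f hi
    simp only [dif_pos hk]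
    exact ⟨hσf _ hk, hσg _ hk i hi rfl⟩

theorem subset_closure_of_mem_closure [TopologicalSpace X] {Y : Type*} [TopologicalSpace Y]
    {g : X → Set Y} (hg : ∀ V : Set Y, IsOpen V → IsOpen {x | (g x ∩ V).Nonempty})
    {A : Set X} {S : Set Y} (h : ∀ y ∈ A, g y ⊆ S) {x : X} (hx : x ∈ closure A) :
    g x ⊆ closure S := by
  intro z hz
  by_contra hzS
  obtain ⟨y, ⟨w, hw, hwS⟩, hyA⟩ :=
    mem_closure_iff.mp hx _ (hg _ isClosed_closure.isOpen_compl) ⟨z, hz, hzS⟩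
  exact hwS (subset_closure (h y hyA hw))

theorem logb_two_natCast_nonneg (n : ℕ) : 0 ≤ Real.logb 2 n :=
  div_nonneg (Real.log_natCast_nonneg n) (Real.log_nonneg one_le_two)

theorem elog2_natCast (n : ℕ) : elog2 n = (Real.logb 2 n : EReal) := rfl

theorem elog2_top : elog2 ⊤ = ⊤ := rfl

theorem elog2_le_of_le {m : ℕ∞} {N : ℕ} {a : ℝ} (ha : 0 ≤ a) (hm : m ≤ N)
    (hN : (N : ℝ) ≤ 2 ^ a) : elog2 m ≤ a := by
  lift m to ℕ using ne_top_of_le_ne_top (ENat.natCast_ne_top N) hm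
  rw [elog2_natCast, EReal.coe_le_coe_iff]
  rcases Nat.eq_zero_or_pos m with rfl | hm0
  · simpa using ha
  · exact (Real.logb_le_iff_le_rpow one_lt_two (by exact_mod_cast hm0)).mpr
      ((Nat.cast_le.mpr (by exact_mod_cast hm)).trans hN)

theorem coverEntropy_le_of_forall_elog2_rinv_le {F : X → U → Set X} {Q : Set X}
    {c : InvCover F Q} {a δ : ℝ}
    (h : ∀ T, 0 < T → elog2 (rinv F Q c T) ≤ ((a + T * δ : ℝ) : EReal)) :
    coverEntropy F Q c ≤ δ := by
  have hT : ∀ T : ℕ, 0 < T → coverEntropy F Q c ≤ ((a / T + δ : ℝ) : EReal) := by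
    intro T hT
    have hT' : (0 : ℝ) < T := by exact_mod_cast hT
    calc coverEntropy F Q c ≤ (((T : ℝ)⁻¹ : ℝ) : EReal) * elog2 (rinv F Q c T) :=
          iInf₂_le T hT
      _ ≤ (((T : ℝ)⁻¹ : ℝ) : EReal) * ((a + T * δ : ℝ) : EReal) :=
          mul_le_mul_of_nonneg_left (h T hT) (EReal.coe_nonneg.mpr (by positivity))
      _ = ((a / T + δ : ℝ) : EReal) := by
          rw [← EReal.coe_mul]
          congr 1
          field_simp
  have hlim : Tendsto (fun T : ℕ => ((a / T + δ : ℝ) : EReal)) atTop (𝓝 (δ : EReal)) :=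
    (continuous_coe_real_ereal.tendsto δ).comp <| by
      simpa using (tendsto_const_div_atTop_nhds_zero_nat a).add_const δ
  exact ge_of_tendsto hlim (eventually_atTop.mpr ⟨1, fun T hT1 => hT T hT1⟩)

section Spanning

variable {F : X → U → Set X} {Q : Set X} {c : InvCover F Q} {τ : ℕ}
  {𝒮 : Set (Fin τ → Set X)}

theorem expNum_le {N : ℕ} (h : ∀ α ∈ 𝒮, ∏ t ∈ Finset.range τ, (Pset 𝒮 α t).ncard ≤ N) :
    expNum 𝒮 ≤ N :=
  csSup_le' <| by
    rintro _ ⟨α, hα, rfl⟩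
    exact h α hα

theorem rinv_le_expNum (hS : IsSpanning F Q c τ 𝒮) : rinv F Q c τ ≤ expNum 𝒮 :=
  sInf_le ⟨𝒮, hS, rfl⟩

theorem exists_isSpanning_rinv_eq (h : rinv F Q c τ ≠ ⊤) :
    ∃ 𝒮 : Set (Fin τ → Set X), IsSpanning F Q c τ 𝒮 ∧ rinv F Q c τ = expNum 𝒮 := by
  have hne : {n : ℕ∞ | ∃ 𝒮 : Set (Fin τ → Set X), IsSpanning F Q c τ 𝒮 ∧
      n = expNum 𝒮}.Nonempty := by
    rw [nonempty_iff_ne_empty]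
    intro he
    rw [rinv, he, sInf_empty] at h
    exact h rfl
  exact csInf_mem hne

theorem Pset_congr {α β : Fin τ → Set X} {s t : ℕ}
    (h : ∀ t' : Fin τ, (t' : ℕ) ≤ s → β t' = α t') (hts : t ≤ s) :
    Pset 𝒮 β t = Pset 𝒮 α t := by
  unfold Pset
  split_ifs
  · ext A
    refine exists_congr fun γ => and_congr_right fun _ => and_congr_left fun _ =>
      forall_congr' fun t' => imp_congr_right fun ht' => ?_
    rw [h t' (ht'.trans hts)]
  · rfl

theorem Pset_nonempty (hτ : 0 < τ) {α : Fin τ → Set X} (hα : α ∈ 𝒮) (t : ℕ) :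
    (Pset 𝒮 α t).Nonempty := by
  unfold Pset
  split_ifs
  exacts [⟨_, α, hα, fun _ _ => rfl, rfl⟩, ⟨_, α, hα, hτ, rfl⟩]

namespace IsSpanning

theorem nonempty (hS : IsSpanning F Q c τ 𝒮) (hQ : Q.Nonempty) : 𝒮.Nonempty :=
  let ⟨x, hx⟩ := hQ
  let ⟨α, hα, _⟩ := hS.2.1 x hx
  ⟨α, hα⟩

theorem finite (hS : IsSpanning F Q c τ 𝒮) : 𝒮.Finite :=
  (Set.Finite.pi fun _ => c.finite).subset fun α hα t _ => hS.1 α hα t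

theorem Pset_subset (hS : IsSpanning F Q c τ 𝒮) (α : Fin τ → Set X) (t : ℕ) :
    Pset 𝒮 α t ⊆ c.cov := by
  unfold Pset
  split_ifs
  · rintro _ ⟨β, hβ, -, rfl⟩
    exact hS.1 β hβ _
  · rintro _ ⟨β, hβ, -, rfl⟩
    exact hS.1 β hβ _

theorem one_le_ncard_Pset (hS : IsSpanning F Q c τ 𝒮) (hτ : 0 < τ) {α : Fin τ → Set X}
    (hα : α ∈ 𝒮) (t : ℕ) : 1 ≤ (Pset 𝒮 α t).ncard :=
  (ncard_pos (c.finite.subset (hS.Pset_subset α t))).mpr (Pset_nonempty hτ hα t)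

theorem prod_ncard_Pset_le_expNum (hS : IsSpanning F Q c τ 𝒮) (hτ : 0 < τ)
    {α : Fin τ → Set X} (hα : α ∈ 𝒮) {s : ℕ} (hs : s ≤ τ) :
    ∏ t ∈ Finset.range s, (Pset 𝒮 α t).ncard ≤ expNum 𝒮 := by
  have hbdd : BddAbove {n | ∃ α ∈ 𝒮, n = ∏ t ∈ Finset.range τ, (Pset 𝒮 α t).ncard} := by
    refine (hS.finite.image fun α => ∏ t ∈ Finset.range τ, (Pset 𝒮 α t).ncard).bddAbove.mono ?_
    rintro _ ⟨α, hα, rfl⟩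
    exact ⟨α, hα, rfl⟩
  exact (Finset.prod_le_prod_of_subset_of_one_le' (Finset.range_mono hs)
    fun t _ _ => hS.one_le_ncard_Pset hτ hα t).trans (le_csSup hbdd ⟨α, hα, rfl⟩)

theorem ncard_Pset_le_expNum (hS : IsSpanning F Q c τ 𝒮) (hτ : 0 < τ) {α : Fin τ → Set X}
    (hα : α ∈ 𝒮) {t : ℕ} (ht : t < τ) : (Pset 𝒮 α t).ncard ≤ expNum 𝒮 :=
  (Finset.single_le_prod' (fun t _ => hS.one_le_ncard_Pset hτ hα t)
    (Finset.mem_range.mpr ht)).trans (hS.prod_ncard_Pset_le_expNum hτ hα le_rfl)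

theorem subset_biUnion_Pset (hS : IsSpanning F Q c τ 𝒮) (α : Fin τ → Set X) {t : ℕ}
    (ht : ¬ t + 1 < τ) : Q ⊆ ⋃ A ∈ Pset 𝒮 α t, A := by
  intro x hx
  obtain ⟨β, hβ, h0, hx0⟩ := hS.2.1 x hx
  rw [Pset, dif_neg ht]
  exact mem_biUnion ⟨β, hβ, h0, rfl⟩ hx0

theorem mapsTo_Pset (hS : IsSpanning F Q c τ 𝒮) {α : Fin τ → Set X} (hα : α ∈ 𝒮) {t : Fin τ}
    {A : Set X} (hA : A ∈ c.cov) (hαA : (t : ℕ) + 1 < τ → α t = A) :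
    ∀ x ∈ A, F x (c.G A) ⊆ ⋃ B ∈ Pset 𝒮 α t, B := by
  intro x hx
  by_cases ht : (t : ℕ) + 1 < τ
  · obtain rfl := hαA ht
    exact hS.2.2 α hα t ht x hx
  · exact (c.inv A hA x hx).trans (hS.subset_biUnion_Pset α ht)

end IsSpanning

end Spanning

/-- A certificate for `coverEntropy ≤ δ`: successor sets `next A` covering the dynamics, whose
branching is paid for by a drop of the bounded potential `φ`. -/
structure BranchingPotential {F : X → U → Set X} {Q : Set X} (c : InvCover F Q) (δ : ℝ) where
  init : Set (Set X)
  next : Set X → Set (Set X)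
  φ : Set X → ℝ
  L : ℝ
  init_subset : init ⊆ c.cov
  subset_biUnion_init : Q ⊆ ⋃ A ∈ init, A
  ncard_init_le : (init.ncard : ℝ) ≤ 2 ^ L
  next_subset : ∀ A, next A ⊆ c.cov
  next_nonempty : ∀ A, (next A).Nonempty
  mapsTo_next : ∀ A ∈ c.cov, ∀ x ∈ A, F x (c.G A) ⊆ ⋃ B ∈ next A, B
  ncard_next_le : ∀ A, ∀ B ∈ next A, ((next A).ncard : ℝ) ≤ 2 ^ (φ A - φ B + δ)
  abs_φ_le : ∀ A, |φ A| ≤ L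

def IsPath (I : Set (Set X)) (next : Set X → Set (Set X)) (p : ℕ → Set X) : Prop :=
  p 0 ∈ I ∧ ∀ m, p (m + 1) ∈ next (p m)

def pathSet (I : Set (Set X)) (next : Set X → Set (Set X)) (T : ℕ) : Set (Fin T → Set X) :=
  (fun (p : ℕ → Set X) (i : Fin T) => p i) '' {p | IsPath I next p}

section Paths

variable {I : Set (Set X)} {next : Set X → Set (Set X)}

theorem exists_seq_mem_next (hnext : ∀ A, (next A).Nonempty) (D : Set X) :
    ∃ r : ℕ → Set X, r 0 = D ∧ ∀ m, r (m + 1) ∈ next (r m) := by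
  choose σ hσ using hnext
  refine ⟨fun m => σ^[m] D, rfl, fun m => ?_⟩
  simp only [Function.iterate_succ_apply']
  exact hσ _

theorem exists_isPath_of_mem (hnext : ∀ A, (next A).Nonempty) {D : Set X} (hD : D ∈ I) :
    ∃ p, IsPath I next p ∧ p 0 = D := by
  obtain ⟨r, hr0, hr⟩ := exists_seq_mem_next hnext D
  exact ⟨r, ⟨hr0 ▸ hD, hr⟩, hr0⟩

theorem IsPath.exists_extend (hnext : ∀ A, (next A).Nonempty) {p : ℕ → Set X}
    (hp : IsPath I next p) (t : ℕ) {D : Set X} (hD : D ∈ next (p t)) :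
    ∃ q, IsPath I next q ∧ (∀ m ≤ t, q m = p m) ∧ q (t + 1) = D := by
  obtain ⟨r, hr0, hr⟩ := exists_seq_mem_next hnext D
  refine ⟨fun m => if m ≤ t then p m else r (m - (t + 1)),
    ⟨by simpa using hp.1, fun m => ?_⟩, fun m hm => if_pos hm, by simp [hr0]⟩
  rcases lt_trichotomy m t with hmt | rfl | hmt
  · simpa [hmt.le, show m + 1 ≤ t by omega] using hp.2 m
  · simpa [hr0] using hD
  · have hm : m + 1 - (t + 1) = m - (t + 1) + 1 := by omega
    simpa [show ¬ m ≤ t by omega, show ¬ m + 1 ≤ t by omega, hm] using hr (m - (t + 1))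

theorem Pset_pathSet_of_lt (hnext : ∀ A, (next A).Nonempty) {T t : ℕ} {p : ℕ → Set X}
    (hp : IsPath I next p) (ht : t + 1 < T) :
    Pset (pathSet I next T) (fun i => p i) t = next (p t) := by
  ext D
  simp only [Pset, dif_pos ht, mem_ofPred_eq]
  constructor
  · rintro ⟨_, ⟨q, hq, rfl⟩, hqp, rfl⟩
    have hqt : q t = p t := hqp ⟨t, by omega⟩ le_rfl
    simpa [hqt] using hq.2 t
  · intro hD
    obtain ⟨q, hq, hqp, hqD⟩ := hp.exists_extend hnext t hD
    exact ⟨_, ⟨q, hq, rfl⟩, fun t' ht' => hqp t' ht', hqD.symm⟩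

theorem Pset_pathSet_of_not_lt (hnext : ∀ A, (next A).Nonempty) {T t : ℕ} (hT : 0 < T)
    (γ : Fin T → Set X) (ht : ¬ t + 1 < T) : Pset (pathSet I next T) γ t = I := by
  ext D
  simp only [Pset, dif_neg ht, mem_ofPred_eq]
  constructor
  · rintro ⟨_, ⟨q, hq, rfl⟩, -, rfl⟩
    exact hq.1
  · intro hD
    obtain ⟨q, hq, hq0⟩ := exists_isPath_of_mem hnext hD
    exact ⟨_, ⟨q, hq, rfl⟩, hT, hq0.symm⟩

end Paths

namespace BranchingPotential

variable {F : X → U → Set X} {Q : Set X} {c : InvCover F Q} {δ : ℝ}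
  (b : BranchingPotential c δ)

theorem L_nonneg : 0 ≤ b.L :=
  (abs_nonneg _).trans (b.abs_φ_le ∅)

theorem mem_cov_of_isPath {p : ℕ → Set X} (hp : IsPath b.init b.next p) (m : ℕ) :
    p m ∈ c.cov := by
  cases m with
  | zero => exact b.init_subset hp.1
  | succ m => exact b.next_subset _ (hp.2 m)

theorem isSpanning_pathSet {T : ℕ} (hT : 0 < T) :
    IsSpanning F Q c T (pathSet b.init b.next T) := by
  refine ⟨?_, fun x hx => ?_, ?_⟩
  · rintro _ ⟨p, hp, rfl⟩ t
    exact b.mem_cov_of_isPath hp t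
  · obtain ⟨D, hD, hxD⟩ := mem_iUnion₂.mp (b.subset_biUnion_init hx)
    obtain ⟨p, hp, hp0⟩ := exists_isPath_of_mem b.next_nonempty hD
    exact ⟨_, ⟨p, hp, rfl⟩, hT, by simpa [hp0] using hxD⟩
  · rintro _ ⟨p, hp, rfl⟩ t ht x hx
    rw [Pset_pathSet_of_lt b.next_nonempty hp ht]
    exact b.mapsTo_next _ (b.mem_cov_of_isPath hp t) x hx

theorem prod_ncard_next_le {p : ℕ → Set X} (hp : IsPath b.init b.next p) (T : ℕ) :
    ∏ t ∈ Finset.range T, ((b.next (p t)).ncard : ℝ) ≤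
      2 ^ (b.φ (p 0) - b.φ (p T) + T * δ) := by
  induction T with
  | zero => simp
  | succ T ih =>
    rw [Finset.prod_range_succ]
    calc _ ≤ 2 ^ (b.φ (p 0) - b.φ (p T) + T * δ) * 2 ^ (b.φ (p T) - b.φ (p (T + 1)) + δ) :=
          mul_le_mul ih (b.ncard_next_le _ _ (hp.2 T)) (by positivity) (by positivity)
      _ = _ := by
          rw [← Real.rpow_add two_pos]
          push_cast
          ring_nf

theorem prod_ncard_Pset_pathSet_le {p : ℕ → Set X} (hp : IsPath b.init b.next p) (T : ℕ) :
    ((∏ t ∈ Finset.range (T + 1),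
      (Pset (pathSet b.init b.next (T + 1)) (fun i => p i) t).ncard : ℕ) : ℝ) ≤
        2 ^ (3 * b.L + T * δ) := by
  have hnext : ∏ t ∈ Finset.range T,
      (Pset (pathSet b.init b.next (T + 1)) (fun i => p i) t).ncard =
        ∏ t ∈ Finset.range T, (b.next (p t)).ncard :=
    Finset.prod_congr rfl fun t ht => by
      rw [Pset_pathSet_of_lt b.next_nonempty hp (by simp at ht; omega)]
  rw [Finset.prod_range_succ, Pset_pathSet_of_not_lt b.next_nonempty T.succ_pos _ (by omega),
    hnext]
  push_cast
  calc _ ≤ 2 ^ (b.φ (p 0) - b.φ (p T) + T * δ) * 2 ^ b.L :=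
        mul_le_mul (b.prod_ncard_next_le hp T) b.ncard_init_le (by positivity) (by positivity)
    _ ≤ 2 ^ (3 * b.L + T * δ) := by
        rw [← Real.rpow_add two_pos]
        apply Real.rpow_le_rpow_of_exponent_le one_le_two
        linarith [abs_le.mp (b.abs_φ_le (p 0)), abs_le.mp (b.abs_φ_le (p T))]

theorem elog2_rinv_le (hδ : 0 ≤ δ) {T : ℕ} (hT : 0 < T) :
    elog2 (rinv F Q c T) ≤ ((3 * b.L + T * δ : ℝ) : EReal) := by
  obtain ⟨T, rfl⟩ : ∃ T', T = T' + 1 := ⟨T - 1, by omega⟩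
  have hL := b.L_nonneg
  have hexpNum : expNum (pathSet b.init b.next (T + 1)) ≤ ⌊(2 : ℝ) ^ (3 * b.L + T * δ)⌋₊ :=
    expNum_le <| by
      rintro _ ⟨p, hp, rfl⟩
      exact Nat.le_floor (b.prod_ncard_Pset_pathSet_le hp T)
  refine elog2_le_of_le (by positivity)
    ((rinv_le_expNum (b.isSpanning_pathSet T.succ_pos)).trans (by exact_mod_cast hexpNum))
    ((Nat.floor_le (by positivity)).trans ?_)
  apply Real.rpow_le_rpow_of_exponent_le one_le_two
  push_cast
  linarith

theorem coverEntropy_le (b : BranchingPotential c δ) (hδ : 0 ≤ δ) : coverEntropy F Q c ≤ δ :=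
  coverEntropy_le_of_forall_elog2_rinv_le fun _ hT => b.elog2_rinv_le hδ hT

end BranchingPotential

/-- The potential `ψ(α, s)` of the header, for `i = (α, s)`. -/
noncomputable def nodePotential {τ : ℕ} (𝒮 : Set (Fin τ → Set X)) (δ : ℝ)
    (i : (Fin τ → Set X) × Fin τ) : ℝ :=
  (i.2 : ℕ) * δ - Real.logb 2 (∏ t ∈ Finset.range i.2, (Pset 𝒮 i.1 t).ncard : ℕ)

theorem nodePotential_zero {τ : ℕ} (𝒮 : Set (Fin τ → Set X)) (δ : ℝ) (β : Fin τ → Set X)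
    (h0 : 0 < τ) : nodePotential 𝒮 δ (β, ⟨0, h0⟩) = 0 := by
  simp [nodePotential]

namespace IsSpanning

variable {F : X → U → Set X} {Q : Set X} {c : InvCover F Q} {τ : ℕ}
  {𝒮 : Set (Fin τ → Set X)}

theorem abs_nodePotential_le (hS : IsSpanning F Q c τ 𝒮) (hτ : 0 < τ)
    {i : (Fin τ → Set X) × Fin τ} (hi : i.1 ∈ 𝒮) :
    |nodePotential 𝒮 (Real.logb 2 (expNum 𝒮) / τ) i| ≤ Real.logb 2 (expNum 𝒮) := by
  obtain ⟨α, s⟩ := i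
  have hu1 : 1 ≤ ∏ t ∈ Finset.range s, (Pset 𝒮 α t).ncard :=
    Finset.one_le_prod' fun t _ => hS.one_le_ncard_Pset hτ hi t
  have hlog0 := Real.logb_nonneg one_lt_two (by exact_mod_cast hu1 :
    (1 : ℝ) ≤ (∏ t ∈ Finset.range s, (Pset 𝒮 α t).ncard : ℕ))
  have hlogn := Real.logb_le_logb_of_le one_lt_two (by positivity)
    (by exact_mod_cast hS.prod_ncard_Pset_le_expNum hτ hi s.2.le :
      ((∏ t ∈ Finset.range s, (Pset 𝒮 α t).ncard : ℕ) : ℝ) ≤ expNum 𝒮)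
  have hsδ : (s : ℝ) * (Real.logb 2 (expNum 𝒮) / τ) ≤ Real.logb 2 (expNum 𝒮) := by
    rw [mul_div_left_comm]
    exact mul_le_of_le_one_right (logb_two_natCast_nonneg _)
      ((div_le_one (by exact_mod_cast hτ)).mpr (by exact_mod_cast s.2.le))
  have hsδ0 : 0 ≤ (s : ℝ) * (Real.logb 2 (expNum 𝒮) / τ) := by
    have := logb_two_natCast_nonneg (expNum 𝒮)
    positivity
  rw [nodePotential, abs_le]
  constructor <;> linarith

theorem nodePotential_succ (hS : IsSpanning F Q c τ 𝒮) (hτ : 0 < τ) {α β : Fin τ → Set X}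
    (hα : α ∈ 𝒮) (δ : ℝ) {s : Fin τ} (hs : (s : ℕ) + 1 < τ)
    (hβα : ∀ t' : Fin τ, (t' : ℕ) ≤ s → β t' = α t') :
    nodePotential 𝒮 δ (β, ⟨s + 1, hs⟩) =
      nodePotential 𝒮 δ (α, s) - Real.logb 2 (Pset 𝒮 α s).ncard + δ := by
  have hprod : ∏ t ∈ Finset.range (s + 1), (Pset 𝒮 β t).ncard =
      (∏ t ∈ Finset.range s, (Pset 𝒮 α t).ncard) * (Pset 𝒮 α s).ncard := by
    rw [Finset.prod_range_succ, Pset_congr hβα le_rfl]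
    congr 1
    exact Finset.prod_congr rfl fun t ht => by rw [Pset_congr hβα (Finset.mem_range.mp ht).le]
  have hu : 0 < ∏ t ∈ Finset.range s, (Pset 𝒮 α t).ncard :=
    Finset.prod_pos fun t _ => hS.one_le_ncard_Pset hτ hα t
  have hP := hS.one_le_ncard_Pset hτ hα s
  simp only [nodePotential, hprod]
  rw [Nat.cast_mul, Real.logb_mul (by positivity) (by positivity)]
  push_cast
  ring

/-- The restart from time `τ - 1` to time `0`: the whole product along `α` is at most
`N(𝒮) = 2 ^ (τ δ)`. -/
theorem logb_ncard_Pset_le (hS : IsSpanning F Q c τ 𝒮) (hτ : 0 < τ) {α : Fin τ → Set X}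
    (hα : α ∈ 𝒮) {s : Fin τ} (hs : ¬ (s : ℕ) + 1 < τ) :
    Real.logb 2 (Pset 𝒮 α s).ncard ≤
      nodePotential 𝒮 (Real.logb 2 (expNum 𝒮) / τ) (α, s) + Real.logb 2 (expNum 𝒮) / τ := by
  have hsτ : (s : ℕ) + 1 = τ := by omega
  have hu : 0 < ∏ t ∈ Finset.range s, (Pset 𝒮 α t).ncard :=
    Finset.prod_pos fun t _ => hS.one_le_ncard_Pset hτ hα t
  have hP := hS.one_le_ncard_Pset hτ hα s
  have hfull : (∏ t ∈ Finset.range s, (Pset 𝒮 α t).ncard) * (Pset 𝒮 α s).ncard =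
      ∏ t ∈ Finset.range τ, (Pset 𝒮 α t).ncard := by
    rw [← Finset.prod_range_succ, hsτ]
  have hlog := Real.logb_le_logb_of_le one_lt_two (by positivity)
    (by exact_mod_cast hfull.trans_le (hS.prod_ncard_Pset_le_expNum hτ hα le_rfl) :
      (((∏ t ∈ Finset.range s, (Pset 𝒮 α t).ncard) * (Pset 𝒮 α s).ncard : ℕ) : ℝ) ≤
        expNum 𝒮)
  rw [Nat.cast_mul, Real.logb_mul (by positivity) (by positivity)] at hlog
  have hsδ : (s : ℝ) * (Real.logb 2 (expNum 𝒮) / τ) + Real.logb 2 (expNum 𝒮) / τ =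
      Real.logb 2 (expNum 𝒮) := by
    rw [← add_one_mul, show (s : ℝ) + 1 = τ by exact_mod_cast hsτ]
    exact mul_div_cancel₀ _ (by exact_mod_cast hτ.ne')
  simp only [nodePotential]
  linarith

theorem exists_ncard_Pset_le_rpow (hS : IsSpanning F Q c τ 𝒮) (hτ : 0 < τ)
    {α : Fin τ → Set X} (hα : α ∈ 𝒮) (s : Fin τ) {B : Set X} (hB : B ∈ Pset 𝒮 α s) :
    ∃ j ∈ 𝒮 ×ˢ (univ : Set (Fin τ)), j.1 j.2 = B ∧
      ((Pset 𝒮 α s).ncard : ℝ) ≤ 2 ^ (nodePotential 𝒮 (Real.logb 2 (expNum 𝒮) / τ) (α, s) -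
        nodePotential 𝒮 (Real.logb 2 (expNum 𝒮) / τ) j + Real.logb 2 (expNum 𝒮) / τ) := by
  have hP := hS.one_le_ncard_Pset hτ hα s
  suffices ∃ j ∈ 𝒮 ×ˢ (univ : Set (Fin τ)), j.1 j.2 = B ∧ Real.logb 2 (Pset 𝒮 α s).ncard ≤
      nodePotential 𝒮 (Real.logb 2 (expNum 𝒮) / τ) (α, s) -
        nodePotential 𝒮 (Real.logb 2 (expNum 𝒮) / τ) j + Real.logb 2 (expNum 𝒮) / τ by
    obtain ⟨j, hj, hjB, hle⟩ := this
    exact ⟨j, hj, hjB, (Real.logb_le_iff_le_rpow one_lt_two (by exact_mod_cast hP)).mp hle⟩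
  unfold Pset at hB
  split_ifs at hB with hs
  · obtain ⟨β, hβ, hβα, rfl⟩ := hB
    refine ⟨(β, ⟨s + 1, hs⟩), ⟨hβ, trivial⟩, rfl, ?_⟩
    rw [hS.nodePotential_succ hτ hα _ hs hβα]
    linarith
  · obtain ⟨β, hβ, h0, rfl⟩ := hB
    refine ⟨(β, ⟨0, h0⟩), ⟨hβ, trivial⟩, rfl, ?_⟩
    rw [nodePotential_zero, sub_zero]
    exact hS.logb_ncard_Pset_le hτ hα hs

theorem nonempty_branchingPotential (hS : IsSpanning F Q c τ 𝒮) (hQ : Q.Nonempty)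
    (hτ : 0 < τ) : Nonempty (BranchingPotential c (Real.logb 2 (expNum 𝒮) / τ)) := by
  obtain ⟨α₀, hα₀⟩ := hS.nonempty hQ
  let last : Fin τ := ⟨τ - 1, by omega⟩
  have hlast : ¬ (last : ℕ) + 1 < τ := by simp only [last]; omega
  obtain ⟨σ, hσ, hσ₀, hσmin⟩ := exists_fiberwise_argmin (hS.finite.prod finite_univ)
    (i₀ := (α₀, last)) ⟨hα₀, trivial⟩ (fun i => i.1 i.2)
    (nodePotential 𝒮 (Real.logb 2 (expNum 𝒮) / τ))
  refine ⟨{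
    init := Pset 𝒮 α₀ last
    next := fun A => Pset 𝒮 (σ A).1 (σ A).2
    φ := fun A => nodePotential 𝒮 (Real.logb 2 (expNum 𝒮) / τ) (σ A)
    L := Real.logb 2 (expNum 𝒮)
    init_subset := hS.Pset_subset α₀ last
    subset_biUnion_init := hS.subset_biUnion_Pset α₀ hlast
    ncard_init_le := ?_
    next_subset := fun A => hS.Pset_subset _ _
    next_nonempty := fun A => Pset_nonempty hτ (hσ A).1 _
    mapsTo_next := fun A hA => hS.mapsTo_Pset (hσ A).1 hA fun ht => ?_
    ncard_next_le := fun A B hB => ?_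
    abs_φ_le := fun A => hS.abs_nodePotential_le hτ (hσ A).1 }⟩
  · have hinit := hS.ncard_Pset_le_expNum hτ hα₀ last.2
    rw [Real.rpow_logb two_pos (by norm_num)
      (by exact_mod_cast (hS.one_le_ncard_Pset hτ hα₀ last).trans hinit)]
    exact_mod_cast hinit
  · by_cases hA' : A ∈ (fun i : (Fin τ → Set X) × Fin τ => i.1 i.2) '' (𝒮 ×ˢ univ)
    · obtain ⟨i, hi, rfl⟩ := hA'
      exact (hσmin i hi).1
    · rw [hσ₀ A hA'] at ht
      exact absurd ht hlast
  · obtain ⟨j, hj, rfl, hle⟩ := hS.exists_ncard_Pset_le_rpow hτ (hσ A).1 _ hB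
    exact hle.trans (Real.rpow_le_rpow_of_exponent_le one_le_two (by linarith [(hσmin j hj).2]))

end IsSpanning

section Closure

variable [TopologicalSpace X] {F : X → U → Set X} {Q : Set X}

def Representatives (c : InvCover F Q) : Type _ :=
  ∀ C : closure '' c.cov, {A : Set X // A ∈ c.cov ∧ closure A = C}

instance (c : InvCover F Q) : Finite (Representatives c) := by
  have := (c.finite.image closure).to_subtype
  have (C : Set X) : Finite {A : Set X // A ∈ c.cov ∧ closure A = C} :=
    (c.finite.subset fun _ hA => hA.1).to_subtype
  exact Pi.finite

instance (c : InvCover F Q) : Nonempty (Representatives c) :=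
  ⟨fun C => ⟨C.2.choose, C.2.choose_spec⟩⟩

namespace Representatives

variable {c : InvCover F Q} {C : Set X}

open Classical in
noncomputable def rep (ρ : Representatives c) (C : Set X) : Set X :=
  if h : C ∈ closure '' c.cov then ρ ⟨C, h⟩ else ∅

theorem rep_mem (ρ : Representatives c) (hC : C ∈ closure '' c.cov) : ρ.rep C ∈ c.cov := by
  rw [rep, dif_pos hC]
  exact (ρ ⟨C, hC⟩).2.1

theorem closure_rep (ρ : Representatives c) (hC : C ∈ closure '' c.cov) :
    closure (ρ.rep C) = C := by
  rw [rep, dif_pos hC]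
  exact (ρ ⟨C, hC⟩).2.2

end Representatives

def closureCover (hQ : IsClosed Q)
    (hlsc : ∀ (u : U) (V : Set X), IsOpen V → IsOpen {x : X | (F x u ∩ V).Nonempty})
    (c : InvCover F Q) (ρ : Representatives c) : InvCover F Q where
  cov := closure '' c.cov
  G C := c.G (ρ.rep C)
  finite := c.finite.image _
  subset := by
    rintro _ ⟨A, hA, rfl⟩
    exact closure_minimal (c.subset A hA) hQ
  covers x hx := by
    obtain ⟨A, hA, hxA⟩ := c.covers hx
    exact ⟨closure A, mem_image_of_mem _ hA, subset_closure hxA⟩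
  inv C hC x hx := by
    rw [← ρ.closure_rep hC] at hx
    simpa [hQ.closure_eq] using
      subset_closure_of_mem_closure (hlsc _) (c.inv _ (ρ.rep_mem hC)) hx

variable (hQ : IsClosed Q)
  (hlsc : ∀ (u : U) (V : Set X), IsOpen V → IsOpen {x : X | (F x u ∩ V).Nonempty})

theorem BranchingPotential.exists_closureCover {c : InvCover F Q} {δ : ℝ}
    (b : BranchingPotential c δ) :
    ∃ ρ : Representatives c, Nonempty (BranchingPotential (closureCover hQ hlsc c ρ) δ) := by
  obtain ⟨σ, hσ, -, hσmin⟩ := exists_fiberwise_argmin c.finite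
    (b.next_subset ∅ (b.next_nonempty ∅).some_mem) closure b.φ
  have hσC : ∀ C ∈ closure '' c.cov, closure (σ C) = C := by
    rintro _ ⟨A, hA, rfl⟩
    exact (hσmin A hA).1
  let ρ : Representatives c := fun C => ⟨σ C, hσ C, hσC C C.2⟩
  have hρ : ∀ C ∈ closure '' c.cov, ρ.rep C = σ C := fun C hC => dif_pos hC
  have hfin : ∀ A, (b.next A).Finite := fun A => c.finite.subset (b.next_subset A)
  refine ⟨ρ, ⟨{
    init := closure '' b.init
    next := fun C => closure '' b.next (σ C)
    φ := fun C => b.φ (σ C)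
    L := b.L
    init_subset := image_mono b.init_subset
    subset_biUnion_init := ?_
    ncard_init_le :=
      (Nat.cast_le.mpr (ncard_image_le (c.finite.subset b.init_subset))).trans b.ncard_init_le
    next_subset := fun C => image_mono (b.next_subset _)
    next_nonempty := fun C => (b.next_nonempty _).image _
    mapsTo_next := fun C hC x hx => ?_
    ncard_next_le := ?_
    abs_φ_le := fun C => b.abs_φ_le _ }⟩⟩
  · rw [biUnion_image]
    exact b.subset_biUnion_init.trans (biUnion_mono subset_rfl fun _ _ => subset_closure)
  · change F x (c.G (ρ.rep C)) ⊆ _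
    rw [hρ C hC, biUnion_image, ← (hfin _).closure_biUnion]
    rw [← hσC C hC] at hx
    exact subset_closure_of_mem_closure (hlsc _) (b.mapsTo_next _ (hσ C)) hx
  · rintro C _ ⟨B, hB, rfl⟩
    calc ((closure '' b.next (σ C)).ncard : ℝ) ≤ (b.next (σ C)).ncard :=
          Nat.cast_le.mpr (ncard_image_le (hfin _))
      _ ≤ 2 ^ (b.φ (σ C) - b.φ B + δ) := b.ncard_next_le _ _ hB
      _ ≤ _ := Real.rpow_le_rpow_of_exponent_le one_le_two
          (by linarith [(hσmin B (b.next_subset _ hB)).2])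

theorem exists_coverEntropy_closureCover_le (c : InvCover F Q) (hQne : Q.Nonempty) {τ : ℕ}
    (hτ : 0 < τ) :
    ∃ ρ : Representatives c, coverEntropy F Q (closureCover hQ hlsc c ρ) ≤
      (((τ : ℝ)⁻¹ : ℝ) : EReal) * elog2 (rinv F Q c τ) := by
  by_cases htop : rinv F Q c τ = ⊤
  · refine ⟨Classical.arbitrary _, ?_⟩
    rw [htop, elog2_top, EReal.coe_mul_top_of_pos (inv_pos.mpr (by exact_mod_cast hτ))]
    exact le_top
  obtain ⟨𝒮, hS, hrinv⟩ := exists_isSpanning_rinv_eq htop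
  obtain ⟨b⟩ := hS.nonempty_branchingPotential hQne hτ
  obtain ⟨ρ, ⟨b'⟩⟩ := b.exists_closureCover hQ hlsc
  refine ⟨ρ, (b'.coverEntropy_le (div_nonneg (logb_two_natCast_nonneg _) τ.cast_nonneg)).trans
    (le_of_eq ?_)⟩
  rw [hrinv, elog2_natCast, ← EReal.coe_mul, div_eq_inv_mul]

end Closure

theorem closure_invCover_general
    {X U : Type*} [TopologicalSpace X]
    (F : X → U → Set X)
    (Q : Set X) (hQ : Q.Nonempty) (hQclosed : IsClosed Q)
    (hlsc : ∀ (u : U) (V : Set X), IsOpen V → IsOpen {x : X | (F x u ∩ V).Nonempty})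
    (c : InvCover F Q) :
    ∃ c' : InvCover F Q,
      c'.cov = closure '' c.cov ∧
      (∀ C ∈ c'.cov, ∃ A ∈ c.cov, C = closure A ∧ c'.G C = c.G A) ∧
      coverEntropy F Q c' ≤ coverEntropy F Q c := by
  obtain ⟨ρ, hρ⟩ := Finite.exists_min fun ρ : Representatives c =>
    coverEntropy F Q (closureCover hQclosed hlsc c ρ)
  refine ⟨closureCover hQclosed hlsc c ρ, rfl,
    fun C hC => ⟨ρ.rep C, ρ.rep_mem hC, (ρ.closure_rep hC).symm, rfl⟩,
    le_iInf₂ fun τ hτ => ?_⟩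
  obtain ⟨ρ', hρ'⟩ := exists_coverEntropy_closureCover_le hQclosed hlsc c hQ hτ
  exact (hρ ρ').trans hρ'

/-- For a topological system with lower semicontinuous `F(·,u)` and closed
`Q`, replacing the elements of an invariant cover `(𝒜,G)` by their closures yields an
invariant cover `(𝒞,H)` (with `H(cl A) = G(A)` for suitable representatives) whose
entropy satisfies `h(𝒞,H) ≤ h(𝒜,G)`. -/
theorem closure_invCover
    {X U : Type*} [TopologicalSpace X] [Nonempty X] [Nonempty U]
    (F : X → U → Set X) (hF : ∀ x u, (F x u).Nonempty)
    (Q : Set X) (hQ : Q.Nonempty) (hQclosed : IsClosed Q)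
    (hlsc : ∀ (u : U) (V : Set X), IsOpen V → IsOpen {x : X | (F x u ∩ V).Nonempty})
    (c : InvCover F Q) :
    ∃ c' : InvCover F Q,
      c'.cov = closure '' c.cov ∧
      (∀ C ∈ c'.cov, ∃ A ∈ c.cov, C = closure A ∧ c'.G C = c.G A) ∧
      coverEntropy F Q c' ≤ coverEntropy F Q c :=
  closure_invCover_general F Q hQ hQclosed hlsc c
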